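/- Define on ℝ⁵ the linear functionals (of the tangent vector v = (v_x,v_y,v_z,v_p,v_q)) dx₁(v) = (3v_x − v_p)/4, dy₁(v) = −(12^{2/3}/8)·v_y, dp₁(v) = v_x, dq₁(v) = −(12^{1/3}/6)·v_q (these are the differentials of the components of the map Φ(x,y,z,p,q) = ((3x−p)/4, −(12^{2/3}/8)y, (z−xp+(3/2)x²)/4, x, −(12^{1/3}/6)q)). Then for every v ∈ ℝ⁵ the following quadratic-form identities hold: 8·dy₁(v)² − 3·dp₁(v)·dq₁(v) = (12^{1/3}/2)·(v_q·v_x + 3v_y²); 9·dp₁(v)² − 12·dp₁(v)·dx₁(v) + 4·dy₁(v)·dq₁(v) = 3v_p·v_x + v_y·v_q; and dq₁(v)² + 6·dy₁(v)·dp₁(v) − 8·dx₁(v)·dy₁(v) = −(12^{2/3}/36)·(9v_p·v_y − v_q²). -/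
import Mathlib


noncomputable section

/-- Tangent vectors to `ℝ⁵`, with components `(v_x, v_y, v_z, v_p, v_q)`. -/
abbrev R5 : Type := ℝ × ℝ × ℝ × ℝ × ℝ

namespace Stmt10

/-- The differential `dx₁(v) = (3v_x − v_p)/4`. -/
def dx₁ (v : R5) : ℝ := (3 * v.1 - v.2.2.2.1) / 4
/-- The differential `dy₁(v) = −(12^{2/3}/8)·v_y`. -/
def dy₁ (v : R5) : ℝ := -((12 : ℝ) ^ ((2 : ℝ) / 3) / 8) * v.2.1
/-- The differential `dp₁(v) = v_x`. -/
def dp₁ (v : R5) : ℝ := v.1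
/-- The differential `dq₁(v) = −(12^{1/3}/6)·v_q`. -/
def dq₁ (v : R5) : ℝ := -((12 : ℝ) ^ ((1 : ℝ) / 3) / 6) * v.2.2.2.2

end Stmt10

open Stmt10

/-- The coordinate diffeomorphism `Φ` pulls back the symmetric bilinear forms of the
non-standard structure associated to `(t,H) = (2s^{1/3}/(s+2), -4s^{2/3}/(s+2))` to constant
multiples of the standard forms `g₁ = dqdx + 3dy²`, `g₃ = 3dpdx + dydq`, `g₂ = 9dpdy − dq²`. -/
theorem coordinate_diffeo_pullback_bilinear_forms_one :
    ∀ v : R5,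
      (8 * dy₁ v ^ 2 - 3 * dp₁ v * dq₁ v
        = ((12 : ℝ) ^ ((1 : ℝ) / 3) / 2) * (v.2.2.2.2 * v.1 + 3 * v.2.1 ^ 2))
      ∧ (9 * dp₁ v ^ 2 - 12 * dp₁ v * dx₁ v + 4 * dy₁ v * dq₁ v
        = 3 * v.2.2.2.1 * v.1 + v.2.1 * v.2.2.2.2)
      ∧ (dq₁ v ^ 2 + 6 * dy₁ v * dp₁ v - 8 * dx₁ v * dy₁ v
        = -((12 : ℝ) ^ ((2 : ℝ) / 3) / 36) * (9 * v.2.2.2.1 * v.2.1 - v.2.2.2.2 ^ 2)) := by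
  intro v
  obtain ⟨x, y, z, p, q⟩ := v
  simp only [dx₁, dy₁, dp₁, dq₁]
  have hba : (12 : ℝ) ^ ((2 : ℝ) / 3) = ((12 : ℝ) ^ ((1 : ℝ) / 3)) ^ 2 := by
    rw [← Real.rpow_natCast ((12:ℝ) ^ ((1:ℝ)/3)) 2, ← Real.rpow_mul (by norm_num)]
    norm_num
  have ha3 : ((12 : ℝ) ^ ((1 : ℝ) / 3)) ^ 3 = 12 := by
    rw [← Real.rpow_natCast ((12:ℝ) ^ ((1:ℝ)/3)) 3, ← Real.rpow_mul (by norm_num)]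
    norm_num
  set a := (12 : ℝ) ^ ((1 : ℝ) / 3)
  set b := (12 : ℝ) ^ ((2 : ℝ) / 3)
  refine ⟨?_, ?_, ?_⟩
  · linear_combination (y^2 / 8 * (b + a^2)) * hba + y^2 / 8 * a * ha3
  · linear_combination (y * q / 12 * a) * hba + (y * q / 12) * ha3
  · linear_combination (-(q^2)/36) * hba
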